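/- Let n ≥ 3 and let λ be a partition of n with a_k parts equal to k. Let X = Σ_{1≤i<j≤n} wt(i,j)·I_{i,j} be a weighted inversion statistic with real weights wt(i,j), and set α_n(X) = Σ_{1≤i<j≤n} wt(i,j) and β_n(X) = Σ_{1≤i<j≤n} (j−i−1)·wt(i,j). Then the average of X over the conjugacy class C_λ equals (1/2 + a_2/(n(n−1)) − a_1(a_1−1)/(2n(n−1)))·α_n(X) + ((n − n·a_1 − a_1 + a_1² − 2a_2)/(n(n−1)(n−2)))·β_n(X). -/

import Mathlib

/-!
Fix `i < j` and a set `C` of permutations closed under conjugation. Conjugating by permutations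
that fix `i` and `j` shows that the number of `ω ∈ C` with `(ω i, ω j) = (a, b)` depends only on
how `a` and `b` sit relative to `{i, j}`. Summed against the sign of `a - b`, the pairs with
`a, b ∉ {i, j}` cancel, which leaves
`2 #{ω ∈ C | ω j < ω i} - |C| = S - F + 2 (j - i - 1) (p₂ - p₁)`,
where `F`, `S` count the `ω` with `(ω i, ω j) = (i, j)`, resp. `(j, i)`, and `p₁`, `p₂` those
with `ω i = i`, resp. `ω i = j`, and `ω j = b` for a fixed `b ∉ {i, j}`. For `C = C_λ`, double
counting over points and over ordered pairs of points gives `n (n - 1) F = a₁ (a₁ - 1) |C|`,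
`n (n - 1) S = 2 a₂ |C|`, `n · #{ω i = i} = a₁ |C|` and `n (n - 1) · #{ω i = j} = (n - a₁) |C|`,
so the average of `I_{i,j}` over `C_λ` is affine in `j - i - 1`; the theorem follows by
linearity in the weights.
-/

/-- The conjugacy class of `S_n` consisting of permutations of cycle type `lam`
(Mathlib's `cycleType` omits fixed points, so we compare with the parts of `lam` not equal
to `1`). -/
noncomputable def conjClass (n : ℕ) (lam : n.Partition) : Finset (Equiv.Perm (Fin n)) :=
  Finset.univ.filter fun ω => ω.cycleType = Multiset.filter (fun i => i ≠ 1) lam.parts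

open Finset Equiv Equiv.Perm

section Finset

variable {ι : Type*}

theorem sum_eq_add_add_sum_compl_pair {M : Type*} [Fintype ι] [DecidableEq ι]
    [AddCommMonoid M] {i j : ι} (hij : i ≠ j) (f : ι → M) :
    ∑ x, f x = f i + f j + ∑ x ∈ {i, j}ᶜ, f x := by
  rw [← sum_pair hij, sum_add_sum_compl]

theorem sum_sum_eq_zero_of_antisymm (s : Finset ι) (f : ι → ι → ℤ)
    (h : ∀ a ∈ s, ∀ b ∈ s, f b a = -f a b) : ∑ a ∈ s, ∑ b ∈ s, f a b = 0 := by
  have hneg : ∑ a ∈ s, ∑ b ∈ s, f a b = -∑ a ∈ s, ∑ b ∈ s, f a b :=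
    calc ∑ a ∈ s, ∑ b ∈ s, f a b = ∑ b ∈ s, ∑ a ∈ s, f a b := sum_comm
      _ = ∑ b ∈ s, ∑ a ∈ s, -f b a :=
        sum_congr rfl fun b hb => sum_congr rfl fun a ha => h b hb a ha
      _ = -∑ a ∈ s, ∑ b ∈ s, f a b := by simp only [sum_neg_distrib]
  linarith

theorem card_mul_sum_eq_card_mul_sum_of_eqOn {s t : Finset ι} (f : ι → ℕ) (hst : s ⊆ t)
    (hf : ∀ x ∈ t, ∀ y ∈ t, f x = f y) : #t * ∑ x ∈ s, f x = #s * ∑ y ∈ t, f y :=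
  calc #t * ∑ x ∈ s, f x = ∑ x ∈ s, ∑ _y ∈ t, f x := by simp [mul_sum, mul_comm]
    _ = ∑ x ∈ s, ∑ y ∈ t, f y :=
      sum_congr rfl fun x hx => sum_congr rfl fun y hy => hf x (hst hx) y hy
    _ = #s * ∑ y ∈ t, f y := by rw [sum_const, smul_eq_mul]

end Finset

section CycleCounts

variable {α : Type*} [Fintype α] [DecidableEq α]

namespace Equiv.Perm

theorem card_filter_card_support_cycleOf_eq (ω : Perm α) {k : ℕ} (hk : k ≠ 0) :
    #{x | #(ω.cycleOf x).support = k} = k * ω.cycleType.count k := by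
  set T := ω.cycleFactorsFinset.filter fun c => #c.support = k
  have hT : ({x | #(ω.cycleOf x).support = k} : Finset α) = T.biUnion support := by
    ext x
    simp only [mem_filter, mem_univ, true_and, mem_biUnion, T]
    constructor
    · intro hx
      have hxω : x ∈ ω.support := by
        by_contra h
        rw [(cycleOf_eq_one_iff ω).2 (notMem_support.1 h), support_one, card_empty] at hx
        exact hk hx.symm
      exact ⟨ω.cycleOf x, ⟨cycleOf_mem_cycleFactorsFinset_iff.2 hxω, hx⟩,
        mem_support_cycleOf_iff.2 ⟨SameCycle.refl ω x, hxω⟩⟩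
    · rintro ⟨c, ⟨hc, rfl⟩, hxc⟩
      rw [← cycle_is_cycleOf hxc hc]
  have hdisj : (T : Set (Perm α)).PairwiseDisjoint support := fun c hc d hd hcd =>
    disjoint_iff_disjoint_support.1 <|
      cycleFactorsFinset_pairwise_disjoint ω (mem_filter.1 hc).1 (mem_filter.1 hd).1 hcd
  rw [hT, card_biUnion hdisj, sum_const_nat fun c hc => (mem_filter.1 hc).2, mul_comm,
    cycleType_def, Multiset.count_map]
  congr 1
  rw [card_def, filter_val]
  exact congrArg _ (Multiset.filter_congr fun c _ => eq_comm)

theorem card_support_cycleOf_eq_two_iff (ω : Perm α) (x : α) :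
    #(ω.cycleOf x).support = 2 ↔ ω x ≠ x ∧ ω (ω x) = x := by
  constructor
  · intro h
    refine ⟨two_le_card_support_cycleOf_iff.1 h.ge, ?_⟩
    simpa [h, pow_two] using (pow_mod_card_support_cycleOf_self_apply ω 2 x).symm
  · rintro ⟨h1, h2⟩
    have hswap := (isCycle_cycleOf ω h1).eq_swap_of_apply_apply_eq_self
      (by rwa [cycleOf_apply_self]) (by rw [cycleOf_apply_self, cycleOf_apply_apply_self, h2])
    rw [hswap, card_support_swap]
    simpa [cycleOf_apply_self] using h1.symm

theorem card_offDiag_filter_apply_eq_and (ω : Perm α) (Q : α → Prop) [DecidablePred Q] :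
    #{p ∈ (univ : Finset α).offDiag | ω p.1 = p.2 ∧ Q p.1} = #{x ∈ ω.support | Q x} := by
  refine card_nbij' Prod.fst (fun x => (x, ω x)) ?_ ?_ ?_ ?_
  · rintro ⟨x, y⟩ h
    simp only [coe_filter, mem_offDiag, mem_univ, true_and, Set.mem_ofPred_eq] at h
    obtain ⟨hxy, rfl, hQ⟩ := h
    simpa [hQ] using hxy.symm
  · intro x h
    simp only [coe_filter, mem_support] at h
    simpa using ⟨h.1.symm, h.2⟩
  · rintro ⟨x, y⟩ h
    simp only [coe_filter, mem_offDiag, mem_univ, true_and] at h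
    simp [h.2.1]
  · intro x _
    rfl

theorem card_offDiag_filter_apply_eq (ω : Perm α) :
    #{p ∈ (univ : Finset α).offDiag | ω p.1 = p.2} = #ω.support := by
  simpa using ω.card_offDiag_filter_apply_eq_and fun _ => True

theorem card_offDiag_filter_apply_eq_and_apply_eq (ω : Perm α) :
    #{p ∈ (univ : Finset α).offDiag | ω p.1 = p.2 ∧ ω p.2 = p.1}
      = 2 * ω.cycleType.count 2 := by
  rw [← ω.card_filter_card_support_cycleOf_eq two_ne_zero]
  have h := ω.card_offDiag_filter_apply_eq_and fun x => ω (ω x) = x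
  convert h using 2
  · exact filter_congr fun p _ => and_congr_right fun h1 => by rw [h1]
  · ext x
    simp only [mem_filter, mem_univ, true_and, mem_support, card_support_cycleOf_eq_two_iff]

theorem card_fixedPoints_add_card_support (ω : Perm α) :
    #{x | ω x = x} + #ω.support = Fintype.card α :=
  card_filter_add_card_filter_not _

end Equiv.Perm

end CycleCounts

section Conjugation

variable {α : Type*}

def IsConjInvariant (C : Finset (Perm α)) : Prop :=
  ∀ σ : Perm α, ∀ ω ∈ C, σ * ω * σ⁻¹ ∈ C

theorem IsConjInvariant.card_filter_conj {C : Finset (Perm α)} (hC : IsConjInvariant C)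
    (σ : Perm α) (P : Perm α → Prop) [DecidablePred P] :
    #{ω ∈ C | P (σ * ω * σ⁻¹)} = #{ω ∈ C | P ω} := by
  refine card_nbij' (fun ω => σ * ω * σ⁻¹) (fun ω => σ⁻¹ * ω * σ) ?_ ?_ ?_ ?_
  · intro ω hω
    simp only [coe_filter] at hω ⊢
    exact ⟨hC σ ω hω.1, hω.2⟩
  · intro ω hω
    simp only [coe_filter] at hω ⊢
    exact ⟨by simpa using hC σ⁻¹ ω hω.1, by simpa [mul_assoc] using hω.2⟩
  · intro ω _
    simp [mul_assoc]
  · intro ω _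
    simp [mul_assoc]

variable [DecidableEq α]

def pointCount (C : Finset (Perm α)) (i a : α) : ℕ := #{ω ∈ C | ω i = a}

def pairCount (C : Finset (Perm α)) (i j a b : α) : ℕ := #{ω ∈ C | ω i = a ∧ ω j = b}

theorem pairCount_comm (C : Finset (Perm α)) (i j a b : α) :
    pairCount C j i b a = pairCount C i j a b := by
  simp only [pairCount, and_comm]

theorem pairCount_self_eq_zero (C : Finset (Perm α)) {i j : α} (hij : i ≠ j) (a : α) :
    pairCount C i j a a = 0 := by
  rw [pairCount, card_eq_zero, filter_eq_empty_iff]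
  rintro ω - ⟨hi, hj⟩
  exact hij (ω.injective (hi.trans hj.symm))

theorem pointCount_eq_sum_pairCount [Fintype α] (C : Finset (Perm α)) (i j a : α) :
    pointCount C i a = ∑ b, pairCount C i j a b := by
  rw [pointCount, card_eq_sum_card_fiberwise (f := fun ω => ω j) (t := univ)
    fun _ _ => mem_coe.2 (mem_univ _)]
  simp only [pairCount, filter_filter]

theorem sum_apply_apply_eq_sum_pairCount {M : Type*} [Fintype α] [AddCommMonoid M]
    (C : Finset (Perm α)) (i j : α) (f : α → α → M) :
    ∑ ω ∈ C, f (ω i) (ω j) = ∑ a, ∑ b, pairCount C i j a b • f a b := by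
  rw [← sum_fiberwise C (fun ω => (ω i, ω j)), Fintype.sum_prod_type]
  refine sum_congr rfl fun a _ => sum_congr rfl fun b _ => ?_
  rw [pairCount, ← sum_const]
  exact sum_congr (by simp) fun ω hω => by simp_all

theorem exists_perm_apply_eq_apply_eq {i j x y : α} (hij : i ≠ j) (hxy : x ≠ y) :
    ∃ σ : Perm α, σ i = x ∧ σ j = y := by
  refine ⟨swap (swap i x j) y * swap i x, ?_, by simp⟩
  rw [mul_apply, swap_apply_left, swap_apply_of_ne_of_ne _ hxy]
  exact fun h => hij.symm (by simpa using congrArg (swap i x) h.symm)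

namespace IsConjInvariant

variable {C : Finset (Perm α)}

theorem pairCount_conj (hC : IsConjInvariant C) (σ : Perm α) (i j a b : α) :
    pairCount C (σ i) (σ j) (σ a) (σ b) = pairCount C i j a b := by
  rw [pairCount, pairCount, ← hC.card_filter_conj σ]
  simp

theorem pairCount_apply_of_fix (hC : IsConjInvariant C) {σ : Perm α} {i j : α}
    (hi : σ i = i) (hj : σ j = j) (a b : α) :
    pairCount C i j (σ a) (σ b) = pairCount C i j a b := by
  conv_lhs => rw [← hi, ← hj]
  exact hC.pairCount_conj σ i j a b

theorem pairCount_swap (hC : IsConjInvariant C) (i j a b : α) :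
    pairCount C i j (swap i j b) (swap i j a) = pairCount C i j a b := by
  rw [← pairCount_comm, ← hC.pairCount_conj (swap i j) i j a b, swap_apply_left,
    swap_apply_right]

theorem pairCount_flip (hC : IsConjInvariant C) {i j x y : α} (hxi : x ≠ i) (hxj : x ≠ j)
    (hyi : y ≠ i) (hyj : y ≠ j) : pairCount C i j y x = pairCount C i j x y := by
  simpa using hC.pairCount_apply_of_fix (σ := swap x y)
    (swap_apply_of_ne_of_ne hxi.symm hyi.symm) (swap_apply_of_ne_of_ne hxj.symm hyj.symm) x y

variable [Fintype α]

theorem sum_card_filter_eq (hC : IsConjInvariant C) (P : Perm α → α → Prop)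
    [∀ ω x, Decidable (P ω x)] (hP : ∀ σ ω x, P (σ * ω * σ⁻¹) (σ x) ↔ P ω x) (i : α) :
    ∑ ω ∈ C, #{x | P ω x} = Fintype.card α * #{ω ∈ C | P ω i} := by
  have hconst : ∀ x ∈ (univ : Finset α), #{ω ∈ C | P ω x} = #{ω ∈ C | P ω i} := by
    intro x _
    rw [← swap_apply_left i x, ← hC.card_filter_conj (swap i x) fun ω => P ω (swap i x i)]
    simp only [hP]
  rw [← card_univ, ← sum_const_nat hconst]
  exact sum_card_bipartiteAbove_eq_sum_card_bipartiteBelow _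

theorem sum_card_offDiag_filter_eq (hC : IsConjInvariant C) (P : Perm α → α → α → Prop)
    [∀ ω x y, Decidable (P ω x y)] (hP : ∀ σ ω x y, P (σ * ω * σ⁻¹) (σ x) (σ y) ↔ P ω x y)
    {i j : α} (hij : i ≠ j) :
    ∑ ω ∈ C, #{p ∈ univ.offDiag | P ω p.1 p.2}
      = #(univ : Finset α).offDiag * #{ω ∈ C | P ω i j} := by
  have hconst : ∀ p ∈ (univ : Finset α).offDiag,
      #{ω ∈ C | P ω p.1 p.2} = #{ω ∈ C | P ω i j} := by
    rintro ⟨x, y⟩ hxy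
    obtain ⟨σ, rfl, rfl⟩ := exists_perm_apply_eq_apply_eq hij (mem_offDiag.1 hxy).2.2
    rw [← hC.card_filter_conj σ fun ω => P ω (σ i) (σ j)]
    simp only [hP]
  rw [← sum_const_nat hconst]
  exact sum_card_bipartiteAbove_eq_sum_card_bipartiteBelow _

theorem card_mul_pointCount_self (hC : IsConjInvariant C) {f : ℕ}
    (hfix : ∀ ω ∈ C, #{x | ω x = x} = f) (i : α) : Fintype.card α * pointCount C i i = f * #C := by
  rw [pointCount, ← hC.sum_card_filter_eq (fun ω x => ω x = x) (by simp) i, sum_const_nat hfix,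
    mul_comm]

theorem card_offDiag_mul_pairCount_fix (hC : IsConjInvariant C) {f : ℕ}
    (hfix : ∀ ω ∈ C, #{x | ω x = x} = f) {i j : α} (hij : i ≠ j) :
    (Fintype.card α * Fintype.card α - Fintype.card α) * pairCount C i j i j
      = (f * f - f) * #C := by
  have h := hC.sum_card_offDiag_filter_eq (fun ω x y => ω x = x ∧ ω y = y) (by simp) hij
  rw [offDiag_card, card_univ] at h
  rw [pairCount, ← h, mul_comm, ← sum_const_nat]
  intro ω hω
  rw [← hfix ω hω, ← offDiag_card]
  congr 1
  ext p
  simp only [mem_filter, mem_offDiag, mem_univ, true_and]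
  tauto

theorem card_offDiag_mul_pairCount_swap (hC : IsConjInvariant C) {t : ℕ}
    (htwo : ∀ ω ∈ C, ω.cycleType.count 2 = t) {i j : α} (hij : i ≠ j) :
    (Fintype.card α * Fintype.card α - Fintype.card α) * pairCount C i j j i
      = 2 * t * #C := by
  have h := hC.sum_card_offDiag_filter_eq (fun ω x y => ω x = y ∧ ω y = x) (by simp) hij
  rw [offDiag_card, card_univ] at h
  rw [pairCount, ← h, mul_comm, ← sum_const_nat]
  intro ω hω
  rw [← htwo ω hω, card_offDiag_filter_apply_eq_and_apply_eq]

theorem card_offDiag_mul_pointCount_add (hC : IsConjInvariant C) {f : ℕ}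
    (hfix : ∀ ω ∈ C, #{x | ω x = x} = f) {i j : α} (hij : i ≠ j) :
    (Fintype.card α * Fintype.card α - Fintype.card α) * pointCount C i j + f * #C
      = Fintype.card α * #C := by
  have h := hC.sum_card_offDiag_filter_eq (fun ω x y => ω x = y) (by simp) hij
  rw [offDiag_card, card_univ] at h
  have hcard : ∀ ω ∈ C, #{p ∈ univ.offDiag | ω p.1 = p.2} + f = Fintype.card α :=
    fun ω hω => by
      rw [card_offDiag_filter_apply_eq, ← hfix ω hω, add_comm, card_fixedPoints_add_card_support]
  rw [pointCount, ← h, mul_comm f, mul_comm (Fintype.card α), ← sum_const_nat hcard,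
    sum_add_distrib, sum_const, smul_eq_mul]

end IsConjInvariant

end Conjugation

section Order

variable {α : Type*} [LinearOrder α]

def inversionSign (a b : α) : ℤ := (if b < a then 1 else 0) - (if a < b then 1 else 0)

theorem inversionSign_comm (a b : α) : inversionSign b a = -inversionSign a b := by
  simp only [inversionSign]
  ring

theorem inversionSign_add_inversionSign {i j x : α} (hij : i < j) (hi : x ≠ i) (hj : x ≠ j) :
    inversionSign i x + inversionSign x j = -2 * if i < x ∧ x < j then 1 else 0 := by
  simp only [inversionSign]
  split_ifs <;> first | order | (exfalso; tauto) | norm_num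

theorem sum_inversionSign_eq (C : Finset (Perm α)) {i j : α} (hij : i ≠ j) :
    ∑ ω ∈ C, inversionSign (ω i) (ω j) = 2 * #{ω ∈ C | ω j < ω i} - #C := by
  have h : ∀ ω ∈ C, inversionSign (ω i) (ω j) = 2 * (if ω j < ω i then 1 else 0) - 1 := by
    intro ω _
    have : ω i ≠ ω j := ω.injective.ne hij
    simp only [inversionSign]
    split_ifs <;> first | order | norm_num
  rw [sum_congr rfl h, sum_sub_distrib, ← mul_sum, sum_boole, sum_const, nsmul_one]

variable [Fintype α] {C : Finset (Perm α)} {i j : α}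

namespace IsConjInvariant

theorem sum_pairCount_mul_inversionSign (hC : IsConjInvariant C) (hij : i < j) :
    ∑ a, ∑ b, (pairCount C i j a b : ℤ) * inversionSign a b
      = pairCount C i j j i - pairCount C i j i j
        + 2 * ∑ x with i < x ∧ x < j, ((pairCount C i j j x : ℤ) - pairCount C i j i x) := by
  set O : Finset α := {i, j}ᶜ
  have hO : ∀ x ∈ O, x ≠ i ∧ x ≠ j := fun x hx => by simpa [O, not_or] using hx
  have hOO : ∑ a ∈ O, ∑ b ∈ O, (pairCount C i j a b : ℤ) * inversionSign a b = 0 := by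
    refine sum_sum_eq_zero_of_antisymm _ _ fun a ha b hb => ?_
    rw [hC.pairCount_flip (hO a ha).1 (hO a ha).2 (hO b hb).1 (hO b hb).2, inversionSign_comm,
      mul_neg]
  have hcross : ∀ x ∈ O, (pairCount C i j i x : ℤ) * inversionSign i x
      + pairCount C i j j x * inversionSign j x
      + (pairCount C i j x i * inversionSign x i + pairCount C i j x j * inversionSign x j)
      = 2 * if i < x ∧ x < j then (pairCount C i j j x : ℤ) - pairCount C i j i x else 0 := by
    intro x hx
    have hτ : swap i j x = x := swap_apply_of_ne_of_ne (hO x hx).1 (hO x hx).2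
    have h := inversionSign_add_inversionSign hij (hO x hx).1 (hO x hx).2
    rw [← hC.pairCount_swap i j x i, ← hC.pairCount_swap i j x j, swap_apply_left,
      swap_apply_right, hτ, inversionSign_comm i x, inversionSign_comm x j]
    split_ifs at h ⊢ <;> linear_combination (pairCount C i j i x - pairCount C i j j x : ℤ) * h
  have hfilter : ({x | i < x ∧ x < j} : Finset α) = {x ∈ O | i < x ∧ x < j} := by
    ext x
    simp only [mem_filter, mem_univ, true_and, iff_and_self]
    exact fun h => mem_compl.2 (by simp [ne_of_gt h.1, ne_of_lt h.2])
  have hsum := sum_congr rfl hcross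
  rw [← mul_sum, ← sum_filter, sum_add_distrib, sum_add_distrib, sum_add_distrib] at hsum
  have hii : inversionSign i i = 0 := by simp [inversionSign]
  have hjj : inversionSign j j = 0 := by simp [inversionSign]
  have hij' : inversionSign i j = -1 := by simp [inversionSign, hij, not_lt_of_gt hij]
  have hji : inversionSign j i = 1 := by simp [inversionSign, hij, not_lt_of_gt hij]
  simp only [sum_eq_add_add_sum_compl_pair (ne_of_lt hij), sum_add_distrib, hii, hjj, hij', hji,
    hfilter]
  linear_combination hsum + hOO

theorem card_mul_sum_pairCount (hC : IsConjInvariant C) {a : α} (ha : a = i ∨ a = j)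
    {s : Finset α} (hs : s ⊆ {i, j}ᶜ) :
    #({i, j}ᶜ : Finset α) * ∑ x ∈ s, pairCount C i j a x
      = #s * ∑ x ∈ ({i, j}ᶜ : Finset α), pairCount C i j a x := by
  refine card_mul_sum_eq_card_mul_sum_of_eqOn _ hs fun x hx y hy => ?_
  simp only [mem_compl, mem_insert, mem_singleton, not_or] at hx hy
  have hσa : swap x y a = a := by
    rcases ha with rfl | rfl
    exacts [swap_apply_of_ne_of_ne (Ne.symm hx.1) (Ne.symm hy.1),
      swap_apply_of_ne_of_ne (Ne.symm hx.2) (Ne.symm hy.2)]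
  have := hC.pairCount_apply_of_fix (swap_apply_of_ne_of_ne (Ne.symm hx.1) (Ne.symm hy.1))
    (swap_apply_of_ne_of_ne (Ne.symm hx.2) (Ne.symm hy.2)) a x
  rwa [hσa, swap_apply_left, eq_comm] at this

theorem card_compl_pair_mul_card_filter_lt (hC : IsConjInvariant C) (hij : i < j) :
    (#({i, j}ᶜ : Finset α) : ℤ)
        * (2 * #{ω ∈ C | ω j < ω i} - #C - pairCount C i j j i + pairCount C i j i j)
      = 2 * #{x | i < x ∧ x < j} * ((pointCount C i j - pairCount C i j j i : ℤ)
          - (pointCount C i i - pairCount C i j i j)) := by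
  have hsign := sum_inversionSign_eq C (ne_of_lt hij)
  simp only [sum_apply_apply_eq_sum_pairCount, nsmul_eq_mul,
    hC.sum_pairCount_mul_inversionSign hij, sum_sub_distrib] at hsign
  have hsub : ({x | i < x ∧ x < j} : Finset α) ⊆ {i, j}ᶜ := fun x hx => by
    simp only [mem_filter, mem_univ, true_and] at hx
    simp [ne_of_gt hx.1, ne_of_lt hx.2]
  have hi := hC.card_mul_sum_pairCount (Or.inl rfl) hsub
  have hj := hC.card_mul_sum_pairCount (Or.inr rfl) hsub
  have hpi := pointCount_eq_sum_pairCount C i j i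
  have hpj := pointCount_eq_sum_pairCount C i j j
  rw [sum_eq_add_add_sum_compl_pair (ne_of_lt hij), pairCount_self_eq_zero C (ne_of_lt hij)]
    at hpi hpj
  zify at hi hj hpi hpj
  linear_combination (-(#({i, j}ᶜ : Finset α) : ℤ)) * hsign + 2 * hj - 2 * hi
    - 2 * (#{x | i < x ∧ x < j} : ℤ) * hpj + 2 * (#{x | i < x ∧ x < j} : ℤ) * hpi

end IsConjInvariant

end Order

theorem IsConjInvariant.two_mul_card_filter_lt {n : ℕ} {C : Finset (Perm (Fin n))}
    (hC : IsConjInvariant C) {f t : ℕ} (hfix : ∀ ω ∈ C, #{x | ω x = x} = f)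
    (htwo : ∀ ω ∈ C, ω.cycleType.count 2 = t) {i j : Fin n} (hij : i < j) :
    2 * (n : ℝ) * (n - 1) * (n - 2) * #{ω ∈ C | ω j < ω i}
      = #C * ((n * (n - 1) + 2 * t - f * (f - 1)) * (n - 2)
          + 2 * ((j - i - 1 : ℕ) : ℝ) * (n - n * f - f + f ^ 2 - 2 * t)) := by
  have hn : 2 ≤ n := by have := j.isLt; have : (i : ℕ) < j := hij; omega
  have hfixed := hC.card_offDiag_mul_pairCount_fix hfix (ne_of_lt hij)
  have hswap := hC.card_offDiag_mul_pairCount_swap htwo (ne_of_lt hij)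
  have hself := hC.card_mul_pointCount_self hfix i
  have hmove := hC.card_offDiag_mul_pointCount_add hfix (ne_of_lt hij)
  have hpair := hC.card_compl_pair_mul_card_filter_lt hij
  have hcompl : #({i, j}ᶜ : Finset (Fin n)) = n - 2 := by
    rw [card_compl, card_pair (ne_of_lt hij), Fintype.card_fin]
  have hIoo : #{x : Fin n | i < x ∧ x < j} = j - i - 1 := by
    rw [← Fin.card_Ioo]
    congr 1
    ext x
    simp
  rw [hcompl, hIoo] at hpair
  simp only [Fintype.card_fin] at hfixed hswap hself hmove
  rify [Nat.le_mul_self n, Nat.le_mul_self f] at hfixed hswap hself hmove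
  have hpairR : ((n : ℝ) - 2)
      * (2 * #{ω ∈ C | ω j < ω i} - #C - pairCount C i j j i + pairCount C i j i j)
      = 2 * ((j - i - 1 : ℕ) : ℝ)
        * ((pointCount C i j - pairCount C i j j i : ℝ)
          - (pointCount C i i - pairCount C i j i j)) := by
    exact_mod_cast hpair
  set d : ℝ := ((j - i - 1 : ℕ) : ℝ)
  linear_combination ((n : ℝ) * (n - 1)) * hpairR + ((n : ℝ) - 2 - 2 * d) * hswap
    + (2 * d - (n - 2)) * hfixed + 2 * d * hmove - 2 * d * (n - 1) * hself

section ConjClass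

variable {n : ℕ} {lam : n.Partition}

theorem Nat.Partition.sum_filter_ne_one_add_count_one (p : n.Partition) :
    (p.parts.filter (· ≠ 1)).sum + p.parts.count 1 = n := by
  have h := Multiset.sum_filter_add_sum_filter_not (s := p.parts) (· ≠ 1)
  have h1 : (p.parts.filter (¬ · ≠ 1)).sum = p.parts.count 1 := by
    simp only [ne_eq, not_not, Multiset.filter_eq', Multiset.sum_replicate, smul_eq_mul, mul_one]
  rw [p.parts_sum] at h
  omega

theorem isConjInvariant_conjClass (n : ℕ) (lam : n.Partition) :
    IsConjInvariant (conjClass n lam) := by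
  intro σ ω hω
  simp only [conjClass, mem_filter, mem_univ, true_and] at hω ⊢
  rw [cycleType_conj, hω]

theorem card_fixedPoints_of_mem_conjClass {ω : Perm (Fin n)} (hω : ω ∈ conjClass n lam) :
    #{x | ω x = x} = lam.parts.count 1 := by
  have h := ω.card_fixedPoints_add_card_support
  rw [← sum_cycleType, (mem_filter.1 hω).2, Fintype.card_fin] at h
  have := lam.sum_filter_ne_one_add_count_one
  omega

theorem count_two_cycleType_of_mem_conjClass {ω : Perm (Fin n)} (hω : ω ∈ conjClass n lam) :
    ω.cycleType.count 2 = lam.parts.count 2 := by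
  rw [(mem_filter.1 hω).2, Multiset.count_filter_of_pos (by decide)]

theorem conjClass_nonempty (lam : n.Partition) : (conjClass n lam).Nonempty := by
  obtain ⟨ω, hω⟩ : ∃ ω : Perm (Fin n), ω.cycleType = lam.parts.filter (· ≠ 1) := by
    rw [exists_with_cycleType_iff, Fintype.card_fin]
    refine ⟨by have := lam.sum_filter_ne_one_add_count_one; omega, fun a ha => ?_⟩
    rw [Multiset.mem_filter] at ha
    have := lam.parts_pos ha.1
    omega
  exact ⟨ω, mem_filter.2 ⟨mem_univ ω, hω⟩⟩

end ConjClass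

noncomputable def inversionCoeffAlpha (n a1 a2 : ℕ) : ℝ :=
  1 / 2 + (a2 : ℝ) / ((n : ℝ) * ((n : ℝ) - 1))
    - (a1 : ℝ) * ((a1 : ℝ) - 1) / (2 * (n : ℝ) * ((n : ℝ) - 1))

noncomputable def inversionCoeffBeta (n a1 a2 : ℕ) : ℝ :=
  ((n : ℝ) - (n : ℝ) * (a1 : ℝ) - (a1 : ℝ) + (a1 : ℝ) ^ 2 - 2 * (a2 : ℝ))
    / ((n : ℝ) * ((n : ℝ) - 1) * ((n : ℝ) - 2))

theorem card_filter_lt_conjClass {n : ℕ} (hn : 3 ≤ n) (lam : n.Partition) {i j : Fin n}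
    (hij : i < j) :
    (#{ω ∈ conjClass n lam | ω j < ω i} : ℝ) = #(conjClass n lam)
      * (inversionCoeffAlpha n (lam.parts.count 1) (lam.parts.count 2)
        + inversionCoeffBeta n (lam.parts.count 1) (lam.parts.count 2)
          * ((j - i - 1 : ℕ) : ℝ)) := by
  have key := (isConjInvariant_conjClass n lam).two_mul_card_filter_lt
    (fun _ => card_fixedPoints_of_mem_conjClass) (fun _ => count_two_cycleType_of_mem_conjClass)
    hij
  have hn' : (3 : ℝ) ≤ n := by exact_mod_cast hn
  have h0 : (n : ℝ) ≠ 0 := by linarith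
  have h1 : (n : ℝ) - 1 ≠ 0 := by linarith
  have h2 : (n : ℝ) - 2 ≠ 0 := by linarith
  rw [inversionCoeffAlpha, inversionCoeffBeta]
  field_simp
  linear_combination key

theorem stmt3 (n : ℕ) (hn : 3 ≤ n) (lam : n.Partition) (a1 a2 : ℕ)
    (ha1 : a1 = Multiset.count 1 lam.parts) (ha2 : a2 = Multiset.count 2 lam.parts)
    (wt : Fin n → Fin n → ℝ) (X : Equiv.Perm (Fin n) → ℝ)
    (hX : ∀ ω, X ω = ∑ p ∈ Finset.univ.filter (fun p : Fin n × Fin n => p.1 < p.2),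
      wt p.1 p.2 * (if ω p.2 < ω p.1 then 1 else 0))
    (α β : ℝ)
    (hα : α = ∑ p ∈ Finset.univ.filter (fun p : Fin n × Fin n => p.1 < p.2), wt p.1 p.2)
    (hβ : β = ∑ p ∈ Finset.univ.filter (fun p : Fin n × Fin n => p.1 < p.2),
      (((p.2 : ℕ) - (p.1 : ℕ) - 1 : ℕ) : ℝ) * wt p.1 p.2) :
    (∑ ω ∈ conjClass n lam, X ω) / ((conjClass n lam).card : ℝ)
      = (1 / 2 + (a2 : ℝ) / ((n : ℝ) * ((n : ℝ) - 1))
          - (a1 : ℝ) * ((a1 : ℝ) - 1) / (2 * (n : ℝ) * ((n : ℝ) - 1))) * α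
        + (((n : ℝ) - (n : ℝ) * (a1 : ℝ) - (a1 : ℝ) + (a1 : ℝ) ^ 2 - 2 * (a2 : ℝ))
            / ((n : ℝ) * ((n : ℝ) - 1) * ((n : ℝ) - 2))) * β := by
  subst ha1 ha2 hα hβ
  have hm : (#(conjClass n lam) : ℝ) ≠ 0 :=
    Nat.cast_ne_zero.2 (conjClass_nonempty lam).card_pos.ne'
  have hsum : ∑ ω ∈ conjClass n lam, X ω
      = ∑ p ∈ univ.filter (fun p : Fin n × Fin n => p.1 < p.2),
          wt p.1 p.2 * #{ω ∈ conjClass n lam | ω p.2 < ω p.1} := by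
    simp only [hX]
    rw [sum_comm]
    simp only [← mul_sum, sum_boole]
  change _ = inversionCoeffAlpha n _ _ * _ + inversionCoeffBeta n _ _ * _
  rw [hsum, sum_div, mul_sum, mul_sum, ← sum_add_distrib]
  refine sum_congr rfl fun p hp => ?_
  rw [card_filter_lt_conjClass hn lam (mem_filter.1 hp).2]
  field_simp
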